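/- Let n ≥ 1 be an integer, p ∈ (1,∞), p' = p/(p−1), α ∈ (0, n/p) and s > n − αp. Then there exists a constant C > 0, depending only on n, p, α and s, such that for every Borel probability measure μ on ℝⁿ and every c > 0 with μ(B(x,r)) ≤ c·r^s for all x ∈ ℝⁿ and r > 0, one has ( ∫_{ℝⁿ} ( ∫_{ℝⁿ} |x−y|^{α−n} dμ(y) )^{p'} dx )^{1/p'} ≤ C · c^{(n−αp)/(sp)}. -/

import Mathlib

/-!
Cut the kernel into dyadic shells at the scales `r_j = c^(-1/s) 2^j`: if `r_j / 2 ≤ |x - y| < r_j`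
then `|x - y|^(α-n) ≤ (r_j / 2)^(α-n) 1_{B(x, r_j)}(y)`, so the potential of `μ` (which has no
atoms) is at most `∑_j (r_j / 2)^(α-n) μ(B(x, r_j))`. By Minkowski's inequality its `L^p'` norm is
at most the sum of the `L^p'` norms of `x ↦ μ(B(x, r))`, and as `∫ μ(B(x, r)) dx = |B(0, r)|` while
`μ(B(x, r)) ≤ min 1 (c r^s)`, each of these is at most `min 1 (c r^s)^(1/p) |B(0, r)|^(1/p')`.
At `r = r_j` the resulting series is `c^((n-αp)/(sp))` times a two-sided geometric series, which
converges at large scales because `α < n/p` and at small scales because `s > n - αp`.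
-/

open MeasureTheory Metric Set Filter Topology Module
open scoped ENNReal

section Minkowski

variable {X : Type*} [MeasurableSpace X] {μ : Measure X} {ι : Type*}

theorem ENNReal.iSup_rpow {κ : Sort*} (g : κ → ℝ≥0∞) {q : ℝ} (hq : 0 < q) :
    (⨆ i, g i) ^ q = ⨆ i, g i ^ q :=
  (ENNReal.monotone_rpow_of_nonneg hq.le).map_iSup_of_continuousAt
    (ENNReal.continuous_rpow_const.continuousAt) (ENNReal.zero_rpow_of_pos hq)

theorem lintegral_finset_sum_rpow_le (s : Finset ι) {f : ι → X → ℝ≥0∞}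
    (hf : ∀ i, AEMeasurable (f i) μ) {q : ℝ} (hq : 1 ≤ q) :
    (∫⁻ x, (∑ i ∈ s, f i x) ^ q ∂μ) ^ (1 / q) ≤ ∑ i ∈ s, (∫⁻ x, f i x ^ q ∂μ) ^ (1 / q) := by
  simpa [eLpNorm'] using eLpNorm'_sum_le (fun i _ ↦ (hf i).aestronglyMeasurable) hq

theorem lintegral_tsum_rpow_le [Countable ι] {f : ι → X → ℝ≥0∞}
    (hf : ∀ i, AEMeasurable (f i) μ) {q : ℝ} (hq : 1 ≤ q) :
    (∫⁻ x, (∑' i, f i x) ^ q ∂μ) ^ (1 / q) ≤ ∑' i, (∫⁻ x, f i x ^ q ∂μ) ^ (1 / q) := by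
  have hq₀ : 0 < q := zero_lt_one.trans_le hq
  have hdir : Directed (· ≤ ·) fun (s : Finset ι) x ↦ (∑ i ∈ s, f i x) ^ q := by
    refine directed_of_isDirected_le fun s t hst x ↦ ?_
    gcongr
  have hmeas (s : Finset ι) : AEMeasurable (fun x ↦ (∑ i ∈ s, f i x) ^ q) μ :=
    (s.aemeasurable_fun_sum fun i _ ↦ hf i).pow_const q
  simp_rw [ENNReal.tsum_eq_iSup_sum, ENNReal.iSup_rpow _ hq₀]
  rw [lintegral_iSup_directed hmeas hdir, ENNReal.iSup_rpow _ (one_div_pos.2 hq₀)]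
  exact iSup_le fun s ↦ (lintegral_finset_sum_rpow_le s hf hq).trans (le_iSup_of_le s le_rfl)

theorem lintegral_const_mul_rpow_one_div {A : ℝ≥0∞} (hA : A ≠ ∞)
    (f : X → ℝ≥0∞) {q : ℝ} (hq : 0 < q) :
    (∫⁻ x, (A * f x) ^ q ∂μ) ^ (1 / q) = A * (∫⁻ x, f x ^ q ∂μ) ^ (1 / q) := by
  simp_rw [ENNReal.mul_rpow_of_nonneg _ _ hq.le]
  rw [lintegral_const_mul' _ _ (ENNReal.rpow_ne_top_of_nonneg hq.le hA),
    ENNReal.mul_rpow_of_nonneg _ _ (by positivity), ← ENNReal.rpow_mul, mul_one_div_cancel hq.ne',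
    ENNReal.rpow_one]

end Minkowski

theorem measure_singleton_eq_zero_of_ball_le {X : Type*} [PseudoMetricSpace X]
    [MeasurableSpace X] {μ : Measure X} {x : X} {c s : ℝ} (hs : 0 < s)
    (h : ∀ r, 0 < r → μ (ball x r) ≤ ENNReal.ofReal (c * r ^ s)) : μ {x} = 0 := by
  have hlim : Tendsto (fun r : ℝ ↦ ENNReal.ofReal (c * r ^ s)) (𝓝[>] 0) (𝓝 0) := by
    have := ENNReal.tendsto_ofReal
      ((Real.continuousAt_rpow_const 0 s (Or.inr hs.le)).tendsto.const_mul c)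
    simpa [Real.zero_rpow hs.ne'] using this.mono_left nhdsWithin_le_nhds
  refine le_antisymm (ge_of_tendsto hlim ?_) zero_le
  filter_upwards [self_mem_nhdsWithin] with r hr
  exact (measure_mono (singleton_subset_iff.2 (mem_ball_self hr))).trans (h r hr)

/-- `c ^ (-1 / s)` is the radius at which the growth bound `c * r ^ s` meets the trivial bound
`μ (ball x r) ≤ 1`. -/
noncomputable def dyadicScale (c s : ℝ) (j : ℤ) : ℝ := c ^ (-1 / s) * 2 ^ j

theorem dyadicScale_pos {c : ℝ} (hc : 0 < c) (s : ℝ) (j : ℤ) : 0 < dyadicScale c s j := by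
  unfold dyadicScale; positivity

theorem dyadicScale_rpow {c : ℝ} (hc : 0 < c) (s β : ℝ) (j : ℤ) :
    dyadicScale c s j ^ β = c ^ (-β / s) * 2 ^ (β * j) := by
  rw [dyadicScale, Real.mul_rpow (by positivity) (by positivity), ← Real.rpow_mul hc.le,
    ← Real.rpow_intCast, ← Real.rpow_mul zero_le_two]
  ring_nf

theorem mul_dyadicScale_rpow {c s : ℝ} (hc : 0 < c) (hs : s ≠ 0) (j : ℤ) :
    c * dyadicScale c s j ^ s = 2 ^ (s * j) := by
  rw [dyadicScale_rpow hc, neg_div_self hs, Real.rpow_neg_one]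
  field_simp

theorem exists_dyadicScale_half_le_lt {c : ℝ} (hc : 0 < c) (s : ℝ) {d : ℝ} (hd : 0 < d) :
    ∃ j, dyadicScale c s j / 2 ≤ d ∧ d < dyadicScale c s j := by
  have ht : 0 < c ^ (-1 / s) := by positivity
  obtain ⟨m, hm, hm'⟩ := exists_mem_Ico_zpow (div_pos hd ht) one_lt_two
  refine ⟨m + 1, ?_, ?_⟩
  · rw [le_div_iff₀ ht] at hm
    rw [dyadicScale, zpow_add_one₀ two_ne_zero]
    linarith
  · rwa [dyadicScale, mul_comm, ← div_lt_iff₀ ht]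

theorem ofReal_rpow_le_tsum_dyadicScale {a c : ℝ} (ha : a ≤ 0) (hc : 0 < c) (s : ℝ) {d : ℝ}
    (hd : 0 < d) :
    ENNReal.ofReal d ^ a ≤
      ∑' j, ENNReal.ofReal ((dyadicScale c s j / 2) ^ a) *
        (Iio (dyadicScale c s j)).indicator 1 d := by
  obtain ⟨j, hjd, hdj⟩ := exists_dyadicScale_half_le_lt hc s hd
  refine le_trans ?_ (ENNReal.le_tsum j)
  rw [indicator_of_mem (mem_Iio.2 hdj), Pi.one_apply, mul_one, ENNReal.ofReal_rpow_of_pos hd]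
  exact ENNReal.ofReal_le_ofReal
    (Real.rpow_le_rpow_of_nonpos (by linarith [dyadicScale_pos hc s j]) hjd ha)

theorem lintegral_rpow_dist_le_tsum {X : Type*} [MetricSpace X] [MeasurableSpace X]
    [OpensMeasurableSpace X] {μ : Measure X} {x : X} (hx : μ {x} = 0) {a c : ℝ} (ha : a ≤ 0)
    (hc : 0 < c) (s : ℝ) :
    ∫⁻ y, ENNReal.ofReal (dist x y) ^ a ∂μ ≤
      ∑' j, ENNReal.ofReal ((dyadicScale c s j / 2) ^ a) * μ (ball x (dyadicScale c s j)) := by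
  have hne : ∀ᵐ y ∂μ, y ≠ x := measure_eq_zero_iff_ae_notMem.1 hx
  calc ∫⁻ y, ENNReal.ofReal (dist x y) ^ a ∂μ
      ≤ ∫⁻ y, ∑' j, ENNReal.ofReal ((dyadicScale c s j / 2) ^ a) *
          (ball x (dyadicScale c s j)).indicator 1 y ∂μ := by
        refine lintegral_mono_ae (hne.mono fun y hy ↦ ?_)
        convert ofReal_rpow_le_tsum_dyadicScale ha hc s (dist_pos.2 hy.symm) using 4 with j
        simp [indicator, dist_comm]
    _ = _ := by
        rw [lintegral_tsum fun j ↦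
          (measurable_one.indicator measurableSet_ball).aemeasurable.const_mul _]
        simp_rw [lintegral_const_mul' _ _ ENNReal.ofReal_ne_top,
          lintegral_indicator_one measurableSet_ball]

noncomputable def dyadicWeight (β s p : ℝ) (j : ℤ) : ℝ :=
  2 ^ (β * j) * min 1 (2 ^ (s * j)) ^ (1 / p)

theorem dyadicWeight_pos (β s p : ℝ) (j : ℤ) : 0 < dyadicWeight β s p j := by
  unfold dyadicWeight; positivity

theorem summable_dyadicWeight {β s p : ℝ} (hp : 0 < p) (hβ : β < 0) (hβs : 0 < β + s / p) :
    Summable (dyadicWeight β s p) := by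
  have hgeom {γ : ℝ} (hγ : γ < 0) : Summable fun n : ℕ ↦ (2 : ℝ) ^ (γ * n) := by
    simp_rw [Real.rpow_mul_natCast zero_le_two]
    exact summable_geometric_of_lt_one (by positivity)
      (Real.rpow_lt_one_of_one_lt_of_neg one_lt_two hγ)
  refine .of_nat_of_neg ?_ ?_
  · refine (hgeom hβ).of_nonneg_of_le (fun n ↦ (dyadicWeight_pos ..).le) fun n ↦ ?_
    have : min 1 (2 ^ (s * n)) ^ (1 / p) ≤ (1 : ℝ) :=
      Real.rpow_le_one (by positivity) (min_le_left _ _) (by positivity)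
    simpa [dyadicWeight] using mul_le_of_le_one_right (by positivity) this
  · refine (hgeom (neg_neg_of_pos hβs)).of_nonneg_of_le (fun n ↦ (dyadicWeight_pos ..).le)
      fun n ↦ ?_
    have : min 1 (2 ^ (s * -n)) ^ (1 / p) ≤ ((2 : ℝ) ^ (s * -n)) ^ (1 / p) := by
      gcongr
      exact min_le_right _ _
    calc dyadicWeight β s p (-n) ≤ 2 ^ (β * -n) * ((2 : ℝ) ^ (s * -n)) ^ (1 / p) := by
          simpa [dyadicWeight] using mul_le_mul_of_nonneg_left this (by positivity)
      _ = 2 ^ (-(β + s / p) * n) := by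
          rw [← Real.rpow_mul zero_le_two, ← Real.rpow_add zero_lt_two]
          ring_nf

theorem half_dyadicScale_rpow_mul_eq {c s : ℝ} (hc : 0 < c) (hs : s ≠ 0) (a b p : ℝ) (j : ℤ) :
    (dyadicScale c s j / 2) ^ a * min 1 (c * dyadicScale c s j ^ s) ^ (1 / p) *
        dyadicScale c s j ^ b =
      2 ^ (-a) * c ^ (-(a + b) / s) * dyadicWeight (a + b) s p j := by
  have hr := dyadicScale_pos hc s j
  have hab := dyadicScale_rpow hc s (a + b) j
  rw [Real.rpow_add hr] at hab
  rw [mul_dyadicScale_rpow hc hs, Real.div_rpow hr.le zero_le_two, dyadicWeight,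
    Real.rpow_neg zero_le_two]
  linear_combination (min 1 (2 ^ (s * j)) ^ (1 / p) / 2 ^ a) * hab

section BallMeasure

variable {E : Type*} [NormedAddCommGroup E] [MeasurableSpace E] [BorelSpace E]
  [SecondCountableTopology E] (μ ν : Measure E) [SFinite μ]

theorem measurable_measure_ball (r : ℝ) : Measurable fun x ↦ μ (ball x r) :=
  measurable_measure_prodMk_left
    (measurableSet_lt (measurable_snd.dist measurable_fst) measurable_const)

theorem lintegral_measure_ball [SFinite ν] [ν.IsAddHaarMeasure] (r : ℝ) :
    ∫⁻ x, μ (ball x r) ∂ν = μ univ * ν (ball 0 r) := by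
  have hS : MeasurableSet {z : E × E | dist z.2 z.1 < r} :=
    measurableSet_lt (measurable_snd.dist measurable_fst) measurable_const
  calc ∫⁻ x, μ (ball x r) ∂ν = (ν.prod μ) {z : E × E | dist z.2 z.1 < r} :=
        (Measure.prod_apply hS).symm
    _ = ∫⁻ y, ν (ball y r) ∂μ := by
      rw [Measure.prod_apply_symm hS]
      refine lintegral_congr fun y ↦ congrArg ν ?_
      ext x
      simp [dist_comm]
    _ = μ univ * ν (ball 0 r) := by
      simp [Measure.addHaar_ball_center, lintegral_const, mul_comm]

theorem lintegral_measure_ball_rpow_le [SFinite ν] [ν.IsAddHaarMeasure] {r q : ℝ} {M : ℝ≥0∞}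
    (hM : M ≠ ∞) (hμM : ∀ x, μ (ball x r) ≤ M) (hq : 1 ≤ q) :
    ∫⁻ x, μ (ball x r) ^ q ∂ν ≤ M ^ (q - 1) * (μ univ * ν (ball 0 r)) := by
  have hsplit (x : E) : μ (ball x r) ^ q = μ (ball x r) ^ (q - 1) * μ (ball x r) := by
    conv_lhs => rw [← sub_add_cancel q 1, ENNReal.rpow_add_of_nonneg _ _ (by linarith) zero_le_one,
      ENNReal.rpow_one]
  calc ∫⁻ x, μ (ball x r) ^ q ∂ν ≤ ∫⁻ x, M ^ (q - 1) * μ (ball x r) ∂ν := by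
        refine lintegral_mono fun x ↦ ?_
        rw [hsplit]
        gcongr
        exact hμM x
    _ = M ^ (q - 1) * (μ univ * ν (ball 0 r)) := by
        rw [lintegral_const_mul' _ _ (ENNReal.rpow_ne_top_of_nonneg (by linarith) hM),
          lintegral_measure_ball]

theorem lintegral_measure_ball_rpow_rpow_le [NormedSpace ℝ E] [FiniteDimensional ℝ E]
    [IsProbabilityMeasure μ] [ν.IsAddHaarMeasure] {p q : ℝ} (hpq : p.HolderConjugate q) {m r : ℝ}
    (hm : 0 ≤ m) (hr : 0 < r) (hμ : ∀ x, μ (ball x r) ≤ ENNReal.ofReal m) :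
    (∫⁻ x, μ (ball x r) ^ q ∂ν) ^ (1 / q) ≤
      ENNReal.ofReal (m ^ (1 / p) * r ^ (finrank ℝ E / q)) * ν (ball 0 1) ^ (1 / q) := by
  have hq := hpq.symm
  have hexp : (q - 1) * (1 / q) = 1 / p := by
    rw [mul_one_div, sub_div, div_self hq.ne_zero, one_div, one_div, hq.one_sub_inv]
  calc (∫⁻ x, μ (ball x r) ^ q ∂ν) ^ (1 / q)
      ≤ (ENNReal.ofReal m ^ (q - 1) * (μ univ * ν (ball 0 r))) ^ (1 / q) :=
        ENNReal.rpow_le_rpow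
          (lintegral_measure_ball_rpow_le μ ν ENNReal.ofReal_ne_top hμ hq.lt.le) hq.one_div_nonneg
    _ = _ := by
        rw [measure_univ, one_mul, Measure.addHaar_ball_of_pos _ _ hr,
          ENNReal.mul_rpow_of_nonneg _ _ hq.one_div_nonneg,
          ENNReal.mul_rpow_of_nonneg _ _ hq.one_div_nonneg, ← ENNReal.rpow_mul, hexp,
          ENNReal.ofReal_rpow_of_nonneg hm hpq.one_div_nonneg,
          ENNReal.ofReal_rpow_of_nonneg (by positivity) hq.one_div_nonneg, ← mul_assoc,
          ← ENNReal.ofReal_mul (by positivity), ← Real.rpow_natCast, ← Real.rpow_mul hr.le,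
          mul_one_div]

end BallMeasure

section RieszPotential

variable {E : Type*} [NormedAddCommGroup E] [NormedSpace ℝ E] [FiniteDimensional ℝ E]
  [MeasurableSpace E] [BorelSpace E] (ν : Measure E) [ν.IsAddHaarMeasure]

theorem lintegral_riesz_potential_rpow_le (μ : Measure E) [IsProbabilityMeasure μ]
    {p q α s c : ℝ} (hpq : p.HolderConjugate q) (hα : α < finrank ℝ E) (hs : 0 < s) (hc : 0 < c)
    (hμ : ∀ x r, 0 < r → μ (ball x r) ≤ ENNReal.ofReal (c * r ^ s)) :
    (∫⁻ x, (∫⁻ y, ENNReal.ofReal ‖x - y‖ ^ (α - finrank ℝ E) ∂μ) ^ q ∂ν) ^ (1 / q) ≤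
      ENNReal.ofReal (c ^ ((finrank ℝ E - α * p) / (s * p))) *
        ((∑' j, ENNReal.ofReal
            (2 ^ (finrank ℝ E - α) * dyadicWeight (α - finrank ℝ E / p) s p j)) *
          ν (ball 0 1) ^ (1 / q)) := by
  set d : ℝ := (finrank ℝ E : ℝ)
  set r := dyadicScale c s
  have hq := hpq.symm
  have hβ : α - d + d / q = α - d / p := by
    rw [div_eq_mul_inv, ← hpq.one_sub_inv]
    ring
  have hγ : -(α - d / p) / s = (d - α * p) / (s * p) := by
    field_simp [hpq.ne_zero]
    ring
  have hr (j : ℤ) : 0 < r j := dyadicScale_pos hc s j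
  have hball (j : ℤ) (x : E) : μ (ball x (r j)) ≤ ENNReal.ofReal (min 1 (c * r j ^ s)) := by
    rw [ENNReal.ofReal_min, ENNReal.ofReal_one]
    exact le_min prob_le_one (hμ x _ (hr j))
  calc (∫⁻ x, (∫⁻ y, ENNReal.ofReal ‖x - y‖ ^ (α - d) ∂μ) ^ q ∂ν) ^ (1 / q)
      ≤ (∫⁻ x, (∑' j, ENNReal.ofReal ((r j / 2) ^ (α - d)) * μ (ball x (r j))) ^ q ∂ν) ^
          (1 / q) := by
        refine ENNReal.rpow_le_rpow (lintegral_mono fun x ↦ ENNReal.rpow_le_rpow ?_ hq.nonneg)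
          hq.one_div_nonneg
        simpa only [dist_eq_norm] using lintegral_rpow_dist_le_tsum
          (measure_singleton_eq_zero_of_ball_le hs (hμ x)) (by linarith) hc s
    _ ≤ ∑' j, (∫⁻ x, (ENNReal.ofReal ((r j / 2) ^ (α - d)) * μ (ball x (r j))) ^ q ∂ν) ^
          (1 / q) :=
        lintegral_tsum_rpow_le
          (fun j ↦ ((measurable_measure_ball μ _).const_mul _).aemeasurable) hq.lt.le
    _ ≤ ∑' j, ENNReal.ofReal ((r j / 2) ^ (α - d)) *
          (ENNReal.ofReal (min 1 (c * r j ^ s) ^ (1 / p) * r j ^ (d / q)) *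
            ν (ball 0 1) ^ (1 / q)) := by
        gcongr with j
        rw [lintegral_const_mul_rpow_one_div ENNReal.ofReal_ne_top _ hq.pos]
        gcongr
        exact lintegral_measure_ball_rpow_rpow_le μ ν hpq
          (le_min zero_le_one (mul_pos hc (Real.rpow_pos_of_pos (hr j) s)).le) (hr j) (hball j)
    _ = ∑' j, ENNReal.ofReal (c ^ ((d - α * p) / (s * p))) *
          (ENNReal.ofReal (2 ^ (d - α) * dyadicWeight (α - d / p) s p j) *
            ν (ball 0 1) ^ (1 / q)) := by
        refine tsum_congr fun j ↦ ?_
        rw [← mul_assoc, ← ENNReal.ofReal_mul (Real.rpow_nonneg (by linarith [hr j]) _),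
          ← mul_assoc, half_dyadicScale_rpow_mul_eq hc hs.ne', hβ, hγ, neg_sub,
          mul_comm (2 ^ (d - α) : ℝ), mul_assoc, ENNReal.ofReal_mul (by positivity), mul_assoc]
    _ = _ := by rw [ENNReal.tsum_mul_left, ENNReal.tsum_mul_right]

theorem exists_lintegral_riesz_potential_rpow_le {p q α s : ℝ} (hpq : p.HolderConjugate q)
    (hα : α < finrank ℝ E / p) (hs : finrank ℝ E - α * p < s) :
    ∃ C : ℝ, 0 < C ∧
      ∀ μ : Measure E, IsProbabilityMeasure μ → ∀ c : ℝ, 0 < c →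
        (∀ x r, 0 < r → μ (ball x r) ≤ ENNReal.ofReal (c * r ^ s)) →
        (∫⁻ x, (∫⁻ y, ENNReal.ofReal ‖x - y‖ ^ (α - finrank ℝ E) ∂μ) ^ q ∂ν) ^ (1 / q) ≤
          ENNReal.ofReal (C * c ^ ((finrank ℝ E - α * p) / (s * p))) := by
  set d : ℝ := (finrank ℝ E : ℝ)
  have hp := hpq.pos
  have hαp : α * p < d := (lt_div_iff₀ hp).1 hα
  have hαd : α < d := hα.trans_le (div_le_self (by positivity) hpq.lt.le)
  have hsum : Summable (dyadicWeight (α - d / p) s p) := by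
    refine summable_dyadicWeight hp (by linarith) ?_
    have h : α - d / p + s / p = (α * p - d + s) / p := by field_simp
    exact h ▸ div_pos (by linarith) hp
  set K : ℝ≥0∞ := (∑' j, ENNReal.ofReal (2 ^ (d - α) * dyadicWeight (α - d / p) s p j)) *
    ν (ball 0 1) ^ (1 / q)
  have hK : K ≠ ∞ := by
    refine ENNReal.mul_ne_top ?_ (ENNReal.rpow_ne_top_of_nonneg hpq.symm.one_div_nonneg
      measure_ball_lt_top.ne)
    rw [← ENNReal.ofReal_tsum_of_nonneg
      (fun j ↦ (mul_pos (by positivity) (dyadicWeight_pos ..)).le) (hsum.mul_left _)]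
    exact ENNReal.ofReal_ne_top
  have hK₀ : K ≠ 0 := by
    refine mul_ne_zero (ENNReal.summable.tsum_ne_zero_iff.2 ⟨0, ?_⟩)
      (ENNReal.rpow_pos (measure_ball_pos ν 0 one_pos) measure_ball_lt_top.ne).ne'
    exact (ENNReal.ofReal_pos.2 (mul_pos (by positivity) (dyadicWeight_pos ..))).ne'
  refine ⟨K.toReal, ENNReal.toReal_pos hK₀ hK, fun μ _ c hc hμ ↦ ?_⟩
  calc _ ≤ ENNReal.ofReal (c ^ ((d - α * p) / (s * p))) * K :=
        lintegral_riesz_potential_rpow_le ν μ hpq hαd (by linarith) hc hμ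
    _ = _ := by rw [ENNReal.ofReal_mul ENNReal.toReal_nonneg, ENNReal.ofReal_toReal hK, mul_comm]

end RieszPotential

theorem statement2 (n : ℕ) (p α s : ℝ) (hp : 1 < p)
    (hα' : α < n / p) (hs : (n : ℝ) - α * p < s) :
    ∃ C : ℝ, 0 < C ∧
      ∀ μ : Measure (EuclideanSpace ℝ (Fin n)), IsProbabilityMeasure μ →
        ∀ c : ℝ, 0 < c →
          (∀ (x : EuclideanSpace ℝ (Fin n)) (r : ℝ), 0 < r →
            μ (Metric.ball x r) ≤ ENNReal.ofReal (c * r ^ s)) →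
          (∫⁻ x, (∫⁻ y, (ENNReal.ofReal ‖x - y‖) ^ (α - (n : ℝ)) ∂μ) ^ (p / (p - 1))) ^
              (1 / (p / (p - 1))) ≤
            ENNReal.ofReal (C * c ^ (((n : ℝ) - α * p) / (s * p))) := by
  have h := exists_lintegral_riesz_potential_rpow_le (volume : Measure (EuclideanSpace ℝ (Fin n)))
    (Real.HolderConjugate.conjExponent hp) (α := α) (s := s)
  rw [finrank_euclideanSpace_fin] at h
  exact h hα' hs
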